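/- arXiv:2407.19723 — 7 statements merged into one kernel-verified Lean document; each statement's English description precedes it below -/
import Mathlib

section
/- Let E be a complex Hilbert space, H : E →L[ℂ] E a self-adjoint bounded operator, K a closed subspace of E with H(K) ⊆ K, and P : E →L[ℂ] E a bounded operator whose range is contained in K and which vanishes on K (P ψ = 0 for all ψ ∈ K). Then the spectrum of H + P is contained in the spectrum of H. (This is the operator-theoretic core of the paper's Proposition that the spectrum of the Schrödinger-like Hamiltonian H_sch = H − γ^j γ₊ (i/β) ∂V/∂x_j is contained in the spectrum of the Schrödinger Hamiltonian H = −(1/β)Δ + V.) -/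
/-!
A self-adjoint `H` leaving `K` invariant also leaves `Kᗮ` invariant, so it commutes with the
orthogonal projection onto `K`; hence so does every resolvent `(λ - H)⁻¹`, which therefore maps
`K` into `K`. Then `Q = (λ - H)⁻¹ P` satisfies `Q² = 0`, so `λ - (H + P) = (λ - H)(1 - Q)` is
invertible with inverse `(1 + Q)(λ - H)⁻¹`.
-/

open Module End

theorem Units.isUnit_sub_of_mul_inv_mul_eq_zero {R : Type*} [Ring R] (u : Rˣ) {p : R}
    (h : p * ↑u⁻¹ * p = 0) : IsUnit (↑u - p) := by
  have hq : IsNilpotent (↑u⁻¹ * p) := ⟨2, by rw [sq, mul_assoc, ← mul_assoc p, h, mul_zero]⟩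
  have hfac : ↑u - p = ↑u * (1 - ↑u⁻¹ * p) := by
    rw [mul_sub, mul_one, ← mul_assoc, Units.mul_inv, one_mul]
  exact hfac ▸ u.isUnit.mul hq.isUnit_one_sub

namespace IsSelfAdjoint

variable {𝕜 E : Type*} [RCLike 𝕜] [NormedAddCommGroup E] [InnerProductSpace 𝕜 E]
  [CompleteSpace E] {T : E →L[𝕜] E} {U : Submodule 𝕜 E} [U.HasOrthogonalProjection]

theorem commute_starProjection (hT : IsSelfAdjoint T) (hU : U ∈ invtSubmodule T) :
    Commute U.starProjection T := by
  rw [ContinuousLinearMap.IsIdempotentElem.commute_iff U.isIdempotentElem_starProjection,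
    U.range_starProjection, U.ker_starProjection]
  exact ⟨hU, ContinuousLinearMap.orthogonal_mem_invtSubmodule (by rwa [hT.adjoint_eq])⟩

theorem mem_invtSubmodule_resolvent (hT : IsSelfAdjoint T) (hU : U ∈ invtSubmodule T) {a : 𝕜}
    (u : (E →L[𝕜] E)ˣ) (hu : ↑u = algebraMap 𝕜 (E →L[𝕜] E) a - T) :
    U ∈ invtSubmodule ↑u⁻¹ := by
  have hcomm : Commute U.starProjection ↑u :=
    hu ▸ (Algebra.commute_algebraMap_right a _).sub_right (hT.commute_starProjection hU)
  simpa using ((ContinuousLinearMap.IsIdempotentElem.commute_iff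
    U.isIdempotentElem_starProjection).mp hcomm.units_inv_right).1

end IsSelfAdjoint

/-- Let `E` be a complex Hilbert space, `H : E →L[ℂ] E` a self-adjoint bounded operator,
`K` a closed subspace of `E` with `H(K) ⊆ K`, and `P : E →L[ℂ] E` a bounded operator
whose range is contained in `K` and which vanishes on `K`.  Then the spectrum of
`H + P` is contained in the spectrum of `H`. -/
theorem spectrum_add_perturbation_subset
    {E : Type*} [NormedAddCommGroup E] [InnerProductSpace ℂ E] [CompleteSpace E]
    (H P : E →L[ℂ] E)
    (hH : IsSelfAdjoint H)
    (K : Submodule ℂ E)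
    (hKclosed : IsClosed (K : Set E))
    (hHK : ∀ ψ ∈ K, H ψ ∈ K)
    (hPrange : ∀ ψ : E, P ψ ∈ K)
    (hPK : ∀ ψ ∈ K, P ψ = 0) :
    spectrum ℂ (H + P) ⊆ spectrum ℂ H := by
  have : CompleteSpace K := hKclosed.completeSpace_coe
  intro a ha
  by_contra hnot
  obtain ⟨u, hu⟩ := spectrum.notMem_iff.mp hnot
  have hKu : K ∈ invtSubmodule ↑u⁻¹ := hH.mem_invtSubmodule_resolvent hHK u hu
  have hPuP : P * ↑u⁻¹ * P = 0 :=
    ContinuousLinearMap.ext fun ψ ↦ hPK _ (hKu (hPrange ψ))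
  refine spectrum.mem_iff.mp ha ?_
  rw [← sub_sub, ← hu]
  exact u.isUnit_sub_of_mul_inv_mul_eq_zero hPuP
end

section
/- Let A be a unital (not necessarily commutative) associative ℂ-algebra, let g, h, s ∈ A, and let β ∈ ℂ with β ≠ 0. Assume g² = 0, h g + g h = β·1, and h² = β·s. Then for every E ∈ ℂ, the element h − E·g is a unit of A if and only if s − E·1 is a unit of A. -/
/-- Let `A` be a unital associative ℂ-algebra, `g h s ∈ A`, and `β ∈ ℂ` nonzero.
Assume `g² = 0`, `hg + gh = β·1`, and `h² = β·s`.  Then for every `E ∈ ℂ`,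
the element `h − E·g` is a unit of `A` iff `s − E·1` is a unit of `A`. -/
theorem isUnit_sub_smul_iff
    {A : Type*} [Ring A] [Algebra ℂ A]
    (g h s : A) (β : ℂ) (hβ : β ≠ 0)
    (hg : g ^ 2 = 0)
    (hgh : h * g + g * h = β • (1 : A))
    (hh : h ^ 2 = β • s) :
    ∀ E : ℂ, IsUnit (h - E • g) ↔ IsUnit (s - E • (1 : A)) := by
  intro E
  have key : (h - E • g) ^ 2 = β • (s - E • (1 : A)) := by
    have h2 : (h - E • g) ^ 2 = h ^ 2 - E • (h * g + g * h) + (E * E) • g ^ 2 := by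
      simp only [sq, mul_sub, sub_mul, smul_mul_assoc, mul_smul_comm, smul_smul,
        smul_add, smul_sub, sub_smul, neg_smul]
      module
    rw [h2, hg, hgh, hh, smul_zero, add_zero, smul_smul, smul_sub, smul_smul,
      mul_comm β E]
  have hsq : IsUnit ((h - E • g) ^ 2) ↔ IsUnit (h - E • g) :=
    isUnit_pow_iff (two_ne_zero)
  have hsm : IsUnit (β • (s - E • (1 : A))) ↔ IsUnit (s - E • (1 : A)) := by
    have : β • (s - E • (1 : A)) = (Units.mk0 β hβ) • (s - E • (1 : A)) := rfl
    rw [this, isUnit_smul_iff]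
  rw [← hsq, key, hsm]
end

section
/- If ψ : ℝ → ℂ² solves the free time-independent Lévy-Leblond equation with γ₊-eigenvalue E, then the function P̂ψ = −iψ′ also solves the free time-independent Lévy-Leblond equation with the same γ₊-eigenvalue E. (In particular, ψ′ is itself differentiable, since by the eigenvalue equation ψ′(x) = (iEγ₊ + iβγ₋)ψ(x).) -/
/-! Multiplying by `i γ¹` turns the Lévy-Leblond equation into the constant-coefficient
linear system `ψ′ = i (β γ₋ + E γ₊) ψ`. For any solution of a system `ψ′ = A ψ`, the derivative
`A ψ` is again differentiable with `ψ″ = A ψ′`, and `A` commutes with complex scalars, so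
`c • ψ′` solves the same system. -/

open Matrix

noncomputable section

/-- The gamma matrix `γ¹ = [[1,0],[0,−1]]`. -/
def γ1 : Matrix (Fin 2) (Fin 2) ℂ := !![1, 0; 0, -1]

/-- The gamma matrix `γ₊ = [[0,1],[0,0]]`. -/
def γp : Matrix (Fin 2) (Fin 2) ℂ := !![0, 1; 0, 0]

/-- The gamma matrix `γ₋ = [[0,0],[1,0]]`. -/
def γm : Matrix (Fin 2) (Fin 2) ℂ := !![0, 0; 1, 0]

/-- `ψ : ℝ → ℂ²` solves the free time-independent Lévy-Leblond equation
with `γ₊`-eigenvalue `E`: `ψ` is differentiable and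
`β γ₋ ψ(x) − i γ¹ ψ′(x) = E γ₊ ψ(x)` for all `x`. -/
def SolvesLL (β E : ℝ) (ψ : ℝ → (Fin 2 → ℂ)) : Prop :=
  Differentiable ℝ ψ ∧
    ∀ x : ℝ, (β : ℂ) • γm.mulVec (ψ x) - Complex.I • γ1.mulVec (deriv ψ x)
      = (E : ℂ) • γp.mulVec (ψ x)

/-- The operator `P̂`: `(P̂ψ)(x) = −i ψ′(x)`. -/
def Phat (ψ : ℝ → (Fin 2 → ℂ)) : ℝ → (Fin 2 → ℂ) :=
  fun x => (-Complex.I) • deriv ψ x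

/-- The operator `D₊`: `(D₊ψ)(x) = −(1/β) γ₊ ψ″(x) + β γ₋ ψ(x)`. -/
def Dplus (β : ℝ) (ψ : ℝ → (Fin 2 → ℂ)) : ℝ → (Fin 2 → ℂ) :=
  fun x => (-(1 / (β : ℂ))) • γp.mulVec (deriv (deriv ψ) x) + (β : ℂ) • γm.mulVec (ψ x)

/-- The operator `P¹`: `(P¹ψ)(x) = γ¹ ψ(−x)`. -/
def P1 (ψ : ℝ → (Fin 2 → ℂ)) : ℝ → (Fin 2 → ℂ) :=
  fun x => γ1.mulVec (ψ (-x))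

section MatrixODE

variable {n : Type*} [Fintype n]

theorem HasDerivAt.const_mulVec (A : Matrix n n ℂ) {ψ : ℝ → n → ℂ} {ψ' : n → ℂ} {x : ℝ}
    (h : HasDerivAt ψ ψ' x) : HasDerivAt (fun y => A *ᵥ ψ y) (A *ᵥ ψ') x :=
  (A.mulVecLin.restrictScalars ℝ).toContinuousLinearMap.hasFDerivAt.comp_hasDerivAt x h

variable {A : Matrix n n ℂ} {ψ : ℝ → n → ℂ}

theorem hasDerivAt_deriv_of_hasDerivAt_mulVec (h : ∀ x, HasDerivAt ψ (A *ᵥ ψ x) x) (x : ℝ) :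
    HasDerivAt (deriv ψ) (A *ᵥ deriv ψ x) x := by
  have hψ' : deriv ψ = fun y => A *ᵥ ψ y := funext fun y => (h y).deriv
  rw [hψ']
  exact (h x).const_mulVec A

theorem hasDerivAt_smul_deriv_of_hasDerivAt_mulVec (h : ∀ x, HasDerivAt ψ (A *ᵥ ψ x) x)
    (c : ℂ) (x : ℝ) : HasDerivAt (fun y => c • deriv ψ y) (A *ᵥ (c • deriv ψ x)) x := by
  rw [mulVec_smul]
  exact (hasDerivAt_deriv_of_hasDerivAt_mulVec h x).const_smul c

end MatrixODE

def llMatrix (β E : ℝ) : Matrix (Fin 2) (Fin 2) ℂ := Complex.I • ((β : ℂ) • γm + (E : ℂ) • γp)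

theorem ll_eq_iff_eq_llMatrix_mulVec (β E : ℝ) (v w : Fin 2 → ℂ) :
    (β : ℂ) • γm *ᵥ v - Complex.I • γ1 *ᵥ w = (E : ℂ) • γp *ᵥ v ↔ w = llMatrix β E *ᵥ v := by
  simp only [funext_iff, Fin.forall_fin_two, mulVec_fin_two, llMatrix, γ1, γm, γp, Pi.sub_apply,
    Pi.smul_apply, smul_eq_mul, Matrix.smul_apply, Matrix.add_apply, of_apply, cons_val_zero,
    cons_val_one, cons_val_fin_one]
  constructor
  · rintro ⟨h0, h1⟩
    exact ⟨by linear_combination Complex.I * h0 + w 0 * Complex.I_sq,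
      by linear_combination -Complex.I * h1 + w 1 * Complex.I_sq⟩
  · rintro ⟨h0, h1⟩
    exact ⟨by linear_combination -Complex.I * h0 - E * v 1 * Complex.I_sq,
      by linear_combination Complex.I * h1 + β * v 0 * Complex.I_sq⟩

theorem solvesLL_iff_hasDerivAt (β E : ℝ) (ψ : ℝ → Fin 2 → ℂ) :
    SolvesLL β E ψ ↔ ∀ x, HasDerivAt ψ (llMatrix β E *ᵥ ψ x) x := by
  constructor
  · rintro ⟨hdiff, hll⟩ x
    rw [← (ll_eq_iff_eq_llMatrix_mulVec β E (ψ x) (deriv ψ x)).1 (hll x)]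
    exact (hdiff x).hasDerivAt
  · intro h
    exact ⟨fun x => (h x).differentiableAt,
      fun x => (ll_eq_iff_eq_llMatrix_mulVec β E _ _).2 (h x).deriv⟩

theorem solvesLL_Phat_general (β : ℝ) (E : ℝ)
    (ψ : ℝ → (Fin 2 → ℂ)) (hψ : SolvesLL β E ψ) :
    SolvesLL β E (Phat ψ) := by
  rw [solvesLL_iff_hasDerivAt] at hψ ⊢
  exact hasDerivAt_smul_deriv_of_hasDerivAt_mulVec hψ (-Complex.I)

/-- If `ψ` solves the free time-independent Lévy-Leblond equation
with `γ₊`-eigenvalue `E`, then so does `P̂ψ = −iψ′`. -/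
theorem solvesLL_Phat (β : ℝ) (hβ : 0 < β) (E : ℝ)
    (ψ : ℝ → (Fin 2 → ℂ)) (hψ : SolvesLL β E ψ) :
    SolvesLL β E (Phat ψ) :=
  solvesLL_Phat_general β E ψ hψ

end
end

section
/- If ψ : ℝ → ℂ² solves the free time-independent Lévy-Leblond equation with γ₊-eigenvalue E, then the function P¹ψ, given by (P¹ψ)(x) = γ¹ ψ(−x), also solves the free time-independent Lévy-Leblond equation with the same γ₊-eigenvalue E. -/
open Matrix

noncomputable section

/-- If `ψ` solves the free time-independent Lévy-Leblond equation
with `γ₊`-eigenvalue `E`, then so does `P¹ψ`, where `(P¹ψ)(x) = γ¹ ψ(−x)`. -/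
theorem solvesLL_P1 (β : ℝ) (hβ : 0 < β) (E : ℝ)
    (ψ : ℝ → (Fin 2 → ℂ)) (hψ : SolvesLL β E ψ) :
    SolvesLL β E (P1 ψ) := by
  obtain ⟨hd, heq⟩ := hψ
  have key : ∀ x : ℝ, HasDerivAt (P1 ψ) (γ1.mulVec ((-1:ℝ) • deriv ψ (-x))) x := by
    intro x
    have h1 : HasDerivAt ψ (deriv ψ (-x)) (-x) := (hd (-x)).hasDerivAt
    have hneg : HasDerivAt (fun y : ℝ => -y) (-1) x := (hasDerivAt_id x).neg
    have h2 : HasDerivAt (fun y => ψ (-y)) ((-1 : ℝ) • deriv ψ (-x)) x := h1.scomp x hneg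
    exact (((Matrix.mulVecLin γ1).toContinuousLinearMap).restrictScalars
      ℝ).hasFDerivAt.comp_hasDerivAt x h2
  constructor
  · exact fun x => (key x).differentiableAt
  · intro x
    have h := heq (-x)
    rw [(key x).deriv]
    funext i
    fin_cases i
    · have h0 := congrFun h 0
      simp [γ1, γm, γp, Matrix.mulVec, dotProduct, Fin.sum_univ_two, P1] at h0 ⊢
      linear_combination -h0
    · have h1 := congrFun h 1
      simp [γ1, γm, γp, Matrix.mulVec, dotProduct, Fin.sum_univ_two, P1] at h1 ⊢
      linear_combination h1

end
end

section
/- For every four-times differentiable function ψ : ℝ → ℂ², the following operator identities hold pointwise: (i) P̂(P̂ψ) = −ψ″; (ii) D₊(D₊ψ) = −ψ″; (iii) P¹(P¹ψ) = ψ; (iv) P̂(D₊ψ) = D₊(P̂ψ); (v) P̂(P¹ψ) + P¹(P̂ψ) = 0; (vi) D₊(P¹ψ) + P¹(D₊ψ) = 0. (These are the (anti)commutation relations making the span of Id, H_sch = −(1/β)∂², P̂, D₊, P¹ close as the ℤ₂³-graded colour Lie superalgebra 𝔇: both P̂ and D₊ square to β·H_sch, P¹ squares to the identity, P̂ and D₊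 commute, and P¹ anticommutes with both P̂ and D₊.) -/
/-! Differentiation commutes with multiplication by constant matrices and scalars, so every
relation reduces to an identity between the γ-matrices acting on ℂ²: `γ₊² = γ₋² = 0` and
`γ₊γ₋ + γ₋γ₊ = 1` give `D₊² = −∂²`, `(γ¹)² = 1` gives `(P¹)² = 1`, and `γ¹` anticommutes with
`γ₊` and `γ₋`. For `P¹` the anticommutation with `P̂` comes instead from the reflection
`x ↦ −x`, which flips the sign of a first derivative but not of a second one. -/

open Matrix

noncomputable section

theorem HasDerivAt.mulVec {𝕜 𝔸 m n : Type*} [NontriviallyNormedField 𝕜] [NormedCommRing 𝔸]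
    [NormedAlgebra 𝕜 𝔸] [Fintype m] [Fintype n] (A : Matrix m n 𝔸) {f : 𝕜 → n → 𝔸}
    {f' : n → 𝔸} {x : 𝕜} (hf : HasDerivAt f f' x) :
    HasDerivAt (fun y => A *ᵥ f y) (A *ᵥ f') x :=
  hasDerivAt_pi.2 fun i => HasDerivAt.fun_sum fun j _ => (hasDerivAt_pi.1 hf j).const_mul (A i j)

theorem deriv_mulVec {𝕜 𝔸 m n : Type*} [NontriviallyNormedField 𝕜] [NormedCommRing 𝔸]
    [NormedAlgebra 𝕜 𝔸] [Fintype m] [Fintype n] (A : Matrix m n 𝔸) {f : 𝕜 → n → 𝔸} {x : 𝕜}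
    (hf : DifferentiableAt 𝕜 f x) : deriv (fun y => A *ᵥ f y) x = A *ᵥ deriv f x :=
  (hf.hasDerivAt.mulVec A).deriv

section GammaMatrices

variable (v : Fin 2 → ℂ)

theorem γ1_mulVec_γ1_mulVec : γ1 *ᵥ γ1 *ᵥ v = v := by
  ext i; fin_cases i <;> simp [γ1, mulVec, dotProduct]

theorem γp_mulVec_γp_mulVec : γp *ᵥ γp *ᵥ v = 0 := by
  ext i; fin_cases i <;> simp [γp, mulVec, dotProduct]

theorem γm_mulVec_γm_mulVec : γm *ᵥ γm *ᵥ v = 0 := by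
  ext i; fin_cases i <;> simp [γm, mulVec, dotProduct]

theorem γp_mulVec_γm_mulVec_add : γp *ᵥ γm *ᵥ v + γm *ᵥ γp *ᵥ v = v := by
  ext i; fin_cases i <;> simp [γp, γm, dotProduct]

theorem γ1_mulVec_γp_mulVec : γ1 *ᵥ γp *ᵥ v = -(γp *ᵥ γ1 *ᵥ v) := by
  ext i; fin_cases i <;> simp [γ1, γp, mulVec, dotProduct]

theorem γ1_mulVec_γm_mulVec : γ1 *ᵥ γm *ᵥ v = -(γm *ᵥ γ1 *ᵥ v) := by
  ext i; fin_cases i <;> simp [γ1, γm, mulVec, dotProduct]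

end GammaMatrices

section Operators

variable {β : ℝ} {f : ℝ → Fin 2 → ℂ}

theorem Phat_eq_smul_deriv (f : ℝ → Fin 2 → ℂ) : Phat f = (-Complex.I) • deriv f := rfl

theorem deriv_Phat (f : ℝ → Fin 2 → ℂ) : deriv (Phat f) = Phat (deriv f) :=
  funext fun _ => deriv_fun_const_smul_field (-Complex.I) (deriv f)

theorem Dplus_smul (a : ℂ) (f : ℝ → Fin 2 → ℂ) : Dplus β (a • f) = a • Dplus β f := by
  have hderiv2 : deriv (deriv (a • f)) = a • deriv (deriv f) := by
    ext1 x
    rw [show deriv (a • f) = a • deriv f from funext fun _ => deriv_const_smul_field _ _]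
    exact deriv_const_smul_field _ _
  ext1 x
  simp only [Dplus, hderiv2, Pi.smul_apply, mulVec_smul, smul_add, smul_comm a]

theorem deriv_Dplus (hf : Differentiable ℝ f) (hf'' : Differentiable ℝ (deriv (deriv f))) :
    deriv (Dplus β f) = Dplus β (deriv f) := by
  ext1 x
  exact ((((hf'' x).hasDerivAt.mulVec γp).const_smul (-(1 / (β : ℂ)))).add
    (((hf x).hasDerivAt.mulVec γm).const_smul (β : ℂ))).deriv

theorem P1_smul (a : ℂ) (f : ℝ → Fin 2 → ℂ) : P1 (a • f) = a • P1 f := by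
  ext1 x
  exact mulVec_smul γ1 a (f (-x))

theorem deriv_P1 (hf : Differentiable ℝ f) : deriv (P1 f) = -P1 (deriv f) := by
  ext1 x
  rw [show P1 f = fun y => γ1 *ᵥ f (-y) from rfl, deriv_mulVec γ1 (by fun_prop), deriv_comp_neg]
  simp [P1, mulVec_neg]

theorem deriv_deriv_P1 (hf : Differentiable ℝ f) (hf' : Differentiable ℝ (deriv f)) :
    deriv (deriv (P1 f)) = P1 (deriv (deriv f)) := by
  ext1 x
  rw [deriv_P1 hf, deriv.neg, deriv_P1 hf', Pi.neg_apply, neg_neg]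

end Operators

section Relations

variable {β : ℝ} {f : ℝ → Fin 2 → ℂ}

theorem Phat_Phat (f : ℝ → Fin 2 → ℂ) : Phat (Phat f) = -deriv (deriv f) := by
  ext1 x
  simp only [Phat, deriv_Phat, smul_smul, neg_mul_neg, Complex.I_mul_I, neg_one_smul,
    Pi.neg_apply]

theorem P1_P1 (f : ℝ → Fin 2 → ℂ) : P1 (P1 f) = f := by
  ext1 x
  simp only [P1, neg_neg, γ1_mulVec_γ1_mulVec]

theorem Dplus_Dplus (hβ : β ≠ 0) (hf : Differentiable ℝ f) (hf' : Differentiable ℝ (deriv f))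
    (hf'' : Differentiable ℝ (deriv (deriv f)))
    (hf''' : Differentiable ℝ (deriv (deriv (deriv f)))) :
    Dplus β (Dplus β f) = -deriv (deriv f) := by
  have hβ' : (β : ℂ) ≠ 0 := by exact_mod_cast hβ
  ext1 x
  rw [Dplus, deriv_Dplus hf hf'', deriv_Dplus hf' hf''']
  simp only [Dplus, mulVec_add, mulVec_smul, γp_mulVec_γp_mulVec, γm_mulVec_γm_mulVec,
    smul_zero, zero_add, add_zero, smul_smul]
  rw [mul_comm (β : ℂ), ← smul_add, γp_mulVec_γm_mulVec_add, neg_mul, one_div,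
    inv_mul_cancel₀ hβ', neg_one_smul, Pi.neg_apply]

theorem Phat_Dplus (hf : Differentiable ℝ f) (hf'' : Differentiable ℝ (deriv (deriv f))) :
    Phat (Dplus β f) = Dplus β (Phat f) := by
  rw [Phat_eq_smul_deriv, Phat_eq_smul_deriv, deriv_Dplus hf hf'', Dplus_smul]

theorem Phat_P1_add_P1_Phat (hf : Differentiable ℝ f) : Phat (P1 f) + P1 (Phat f) = 0 := by
  rw [Phat_eq_smul_deriv, Phat_eq_smul_deriv, deriv_P1 hf, P1_smul, smul_neg, neg_add_cancel]

theorem Dplus_P1_add_P1_Dplus (hf : Differentiable ℝ f) (hf' : Differentiable ℝ (deriv f)) :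
    Dplus β (P1 f) + P1 (Dplus β f) = 0 := by
  ext1 x
  simp only [Dplus, P1, deriv_deriv_P1 hf hf', Pi.add_apply, mulVec_add, mulVec_smul,
    γ1_mulVec_γp_mulVec, γ1_mulVec_γm_mulVec, smul_neg, Pi.zero_apply]
  abel

end Relations

/-- For every four-times differentiable `ψ : ℝ → ℂ²`, the operators
`P̂`, `D₊`, `P¹` satisfy the (anti)commutation relations of the ℤ₂³-graded colour Lie
superalgebra 𝔇:  `P̂² = D₊² = −∂²` (i.e. `β·H_sch`), `(P¹)² = Id`, `[P̂, D₊] = 0`,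
`{P̂, P¹} = 0` and `{D₊, P¹} = 0`. -/
theorem colour_relations (β : ℝ) (hβ : 0 < β) (ψ : ℝ → (Fin 2 → ℂ))
    (hψ1 : Differentiable ℝ ψ)
    (hψ2 : Differentiable ℝ (deriv ψ))
    (hψ3 : Differentiable ℝ (deriv (deriv ψ)))
    (hψ4 : Differentiable ℝ (deriv (deriv (deriv ψ)))) :
    (∀ x : ℝ, Phat (Phat ψ) x = -(deriv (deriv ψ) x)) ∧
    (∀ x : ℝ, Dplus β (Dplus β ψ) x = -(deriv (deriv ψ) x)) ∧
    (∀ x : ℝ, P1 (P1 ψ) x = ψ x) ∧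
    (∀ x : ℝ, Phat (Dplus β ψ) x = Dplus β (Phat ψ) x) ∧
    (∀ x : ℝ, Phat (P1 ψ) x + P1 (Phat ψ) x = 0) ∧
    (∀ x : ℝ, Dplus β (P1 ψ) x + P1 (Dplus β ψ) x = 0) :=
  ⟨congrFun (Phat_Phat ψ), congrFun (Dplus_Dplus hβ.ne' hψ1 hψ2 hψ3 hψ4), congrFun (P1_P1 ψ),
    congrFun (Phat_Dplus hψ1 hψ3), congrFun (Phat_P1_add_P1_Phat hψ1),
    congrFun (Dplus_P1_add_P1_Dplus hψ1 hψ2)⟩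

end
end

section
/- Let E > 0 and suppose ψ : ℝ → ℂ² solves the free time-independent Lévy-Leblond equation with γ₊-eigenvalue E. Then there exist complex numbers a, b and twice-differentiable functions φ₁, φ₂ : ℝ → ℂ² such that for j = 1, 2 and all x ∈ ℝ: −i φⱼ′(x) = √(Eβ) φⱼ(x) and (D₊φⱼ)(x) = √(Eβ) φⱼ(x), and ψ(x) = a φ₁(x) + b γ¹ φ₂(−x) for all x ∈ ℝ. (Forward direction of the paper's theorem: every solution is a combination of a simultaneous eigenstate of P̂ and D₊ with positive eigenvalues and the image under P¹ of such an eigenstate.) -/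
open Matrix

noncomputable section

/-!
Componentwise the equation reads `ψ₀' = i E ψ₁`, `ψ₁' = i β ψ₀`. For `k = √(Eβ)` the
combinations `± k ψ₀ + E ψ₁` solve `f' = ± i k f`, so they are multiples of `e^{± i k x}`.
Solving back for `ψ` writes it as a combination of the plane wave `φ(x) = e^{ikx} (E, k)` and
of `P¹φ(x) = e^{-ikx} (E, -k)`. The plane wave is an eigenfunction of `P̂` with eigenvalue `k`,
and of `D₊` with eigenvalue `k` because `β E = k²`.
-/

open Complex

theorem hasDerivAt_cexp_mul_ofReal (c : ℂ) (x : ℝ) :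
    HasDerivAt (fun t : ℝ => exp (c * t)) (c * exp (c * x)) x := by
  simpa [mul_comm] using ((hasDerivAt_id (x : ℂ)).const_mul c).cexp.comp_ofReal

theorem eq_cexp_mul_of_hasDerivAt {c : ℂ} {f : ℝ → ℂ} (hf : ∀ x, HasDerivAt f (c * f x) x)
    (x : ℝ) : f x = exp (c * x) * f 0 := by
  let g : ℝ → ℂ := fun t => exp (-c * t) * f t
  have hg : ∀ t, HasDerivAt g 0 t := fun t =>
    ((hasDerivAt_cexp_mul_ofReal (-c) t).mul (hf t)).congr_deriv (by ring)
  have hgx : g x = f 0 := by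
    simpa [g] using is_const_of_deriv_eq_zero (fun t => (hg t).differentiableAt)
      (fun t => (hg t).deriv) x 0
  calc f x = exp (c * x) * g x := by simp [g, ← mul_assoc, ← Complex.exp_add]
    _ = exp (c * x) * f 0 := by rw [hgx]

section Gamma

variable (u : Fin 2 → ℂ)

@[simp]
theorem γ1_mulVec : γ1 *ᵥ u = ![u 0, -u 1] := by
  ext i; fin_cases i <;> simp [γ1, vecHead, vecTail]

@[simp]
theorem γp_mulVec : γp *ᵥ u = ![u 1, 0] := by
  ext i; fin_cases i <;> simp [γp, vecHead, vecTail]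

@[simp]
theorem γm_mulVec : γm *ᵥ u = ![0, u 0] := by
  ext i; fin_cases i <;> simp [γm, vecHead, vecTail]

end Gamma

section PlaneWave

variable (k : ℝ) (v : Fin 2 → ℂ)

def planeWave (x : ℝ) : Fin 2 → ℂ := exp (I * k * x) • v

theorem hasDerivAt_planeWave (x : ℝ) :
    HasDerivAt (planeWave k v) ((I * k) • planeWave k v x) x :=
  ((hasDerivAt_cexp_mul_ofReal (I * k) x).smul_const v).congr_deriv (by rw [planeWave, smul_smul])

theorem deriv_planeWave : deriv (planeWave k v) = fun x => (I * k) • planeWave k v x :=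
  funext fun x => (hasDerivAt_planeWave k v x).deriv

theorem differentiable_planeWave : Differentiable ℝ (planeWave k v) :=
  fun x => (hasDerivAt_planeWave k v x).differentiableAt

theorem differentiable_deriv_planeWave : Differentiable ℝ (deriv (planeWave k v)) := by
  rw [deriv_planeWave]
  exact (differentiable_planeWave k v).const_smul (I * k : ℂ)

theorem deriv_deriv_planeWave :
    deriv (deriv (planeWave k v)) = fun x => (-(k : ℂ) ^ 2) • planeWave k v x := by
  rw [deriv_planeWave]
  funext x
  refine ((hasDerivAt_planeWave k v x).const_smul (I * k)).deriv.trans ?_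
  rw [smul_smul]
  congr 1
  linear_combination (k : ℂ) ^ 2 * I_sq

theorem Phat_planeWave (x : ℝ) : Phat (planeWave k v) x = (k : ℂ) • planeWave k v x := by
  rw [Phat, deriv_planeWave, smul_smul, ← mul_assoc, neg_mul, I_mul_I, neg_neg, one_mul]

theorem Dplus_planeWave {β : ℝ} (hβ : β ≠ 0) (hv : β * v 0 = k * v 1) (x : ℝ) :
    Dplus β (planeWave k v) x = (k : ℂ) • planeWave k v x := by
  have hβ' : (β : ℂ) ≠ 0 := ofReal_ne_zero.mpr hβ
  rw [Dplus, deriv_deriv_planeWave, γp_mulVec, γm_mulVec]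
  simp only [planeWave]
  generalize exp (I * k * x) = e
  funext i
  fin_cases i <;> simp only [Pi.add_apply, Pi.smul_apply, smul_cons, smul_eq_mul,
    smul_empty, Fin.zero_eta, Fin.mk_one, cons_val_zero, cons_val_one, cons_val_fin_one]
  · field_simp
    linear_combination (-(k : ℂ) * e) * hv
  · linear_combination e * hv

end PlaneWave

namespace SolvesLL

variable {β E : ℝ} {ψ : ℝ → Fin 2 → ℂ}

theorem deriv_apply (h : SolvesLL β E ψ) (x : ℝ) :
    deriv ψ x 0 = I * E * ψ x 1 ∧ deriv ψ x 1 = I * β * ψ x 0 := by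
  have hx := h.2 x
  rw [γm_mulVec, γ1_mulVec, γp_mulVec] at hx
  have h0 : -(I * deriv ψ x 0) = E * ψ x 1 := by simpa using congrFun hx 0
  have h1 : β * ψ x 0 + I * deriv ψ x 1 = 0 := by simpa using congrFun hx 1
  constructor
  · linear_combination I * h0 + deriv ψ x 0 * I_sq
  · linear_combination (-I) * h1 + deriv ψ x 1 * I_sq

theorem combination_eq_cexp_mul (h : SolvesLL β E ψ) {k : ℝ} (hk : k * k = E * β) (x : ℝ) :
    k * ψ x 0 + E * ψ x 1 = exp (I * k * x) * (k * ψ 0 0 + E * ψ 0 1) := by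
  refine eq_cexp_mul_of_hasDerivAt (f := fun y => k * ψ y 0 + E * ψ y 1) (fun x => ?_) x
  have hk' : (k : ℂ) * k = E * β := by exact_mod_cast hk
  obtain ⟨h0, h1⟩ := h.deriv_apply x
  have hd := hasDerivAt_pi.mp (h.1 x).hasDerivAt
  exact (((hd 0).const_mul (k : ℂ)).add ((hd 1).const_mul (E : ℂ))).congr_deriv
    (by rw [h0, h1]; linear_combination (-I) * ψ x 0 * hk')

theorem eq_smul_planeWave_add_smul_P1 (h : SolvesLL β E ψ) {k : ℝ} (hk : k * k = E * β) (hk0 : k ≠ 0)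
    (hE : E ≠ 0) (x : ℝ) :
    ψ x = ((k * ψ 0 0 + E * ψ 0 1) / (2 * k * E)) • planeWave k ![E, k] x
      + ((k * ψ 0 0 - E * ψ 0 1) / (2 * k * E)) • P1 (planeWave k ![E, k]) x := by
  have hk0' : (k : ℂ) ≠ 0 := ofReal_ne_zero.mpr hk0
  have hE' : (E : ℂ) ≠ 0 := ofReal_ne_zero.mpr hE
  have hu := h.combination_eq_cexp_mul hk x
  have hw := h.combination_eq_cexp_mul (k := -k) (by linarith) x
  push_cast at hw
  rw [show I * -(k : ℂ) * x = -(I * k * x) by ring] at hw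
  funext i
  fin_cases i <;> simp only [P1, γ1_mulVec, planeWave, Pi.add_apply, smul_cons, smul_eq_mul,
    smul_empty, Fin.zero_eta, Fin.mk_one, cons_val_zero, cons_val_one, cons_val_fin_one, ofReal_neg, mul_neg] <;>
    generalize exp (I * k * x) = e at hu ⊢ <;> generalize exp (-(I * k * x)) = e' at hw ⊢ <;>
    field_simp
  · linear_combination hu - hw
  · linear_combination hu + hw

end SolvesLL

/-- forward direction.  If `E > 0` and `ψ` solves the free
time-independent Lévy-Leblond equation with `γ₊`-eigenvalue `E`, then `ψ` is a linear
combination `a φ₁ + b P¹φ₂` of simultaneous eigenstates `φ₁, φ₂` of `P̂` and `D₊`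
with eigenvalue `√(Eβ) > 0`. -/
theorem solvesLL_decomposition (β : ℝ) (hβ : 0 < β) (E : ℝ) (hE : 0 < E)
    (ψ : ℝ → (Fin 2 → ℂ)) (hψ : SolvesLL β E ψ) :
    ∃ (a b : ℂ) (φ₁ φ₂ : ℝ → (Fin 2 → ℂ)),
      (Differentiable ℝ φ₁ ∧ Differentiable ℝ (deriv φ₁)) ∧
      (Differentiable ℝ φ₂ ∧ Differentiable ℝ (deriv φ₂)) ∧
      (∀ x : ℝ, Phat φ₁ x = ((Real.sqrt (E * β) : ℝ) : ℂ) • φ₁ x) ∧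
      (∀ x : ℝ, Dplus β φ₁ x = ((Real.sqrt (E * β) : ℝ) : ℂ) • φ₁ x) ∧
      (∀ x : ℝ, Phat φ₂ x = ((Real.sqrt (E * β) : ℝ) : ℂ) • φ₂ x) ∧
      (∀ x : ℝ, Dplus β φ₂ x = ((Real.sqrt (E * β) : ℝ) : ℂ) • φ₂ x) ∧
      (∀ x : ℝ, ψ x = a • φ₁ x + b • γ1.mulVec (φ₂ (-x))) := by
  set k := Real.sqrt (E * β)
  have hk : k * k = E * β := Real.mul_self_sqrt (by positivity)
  have hk0 : k ≠ 0 := (Real.sqrt_pos.mpr (by positivity)).ne'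
  have hv : (β : ℂ) * ![(E : ℂ), k] 0 = k * ![(E : ℂ), k] 1 := by
    simp only [cons_val_zero, cons_val_one]
    exact_mod_cast (by linarith)
  have hφ := differentiable_planeWave k ![E, k]
  have hφ' := differentiable_deriv_planeWave k ![E, k]
  exact ⟨_, _, planeWave k ![E, k], planeWave k ![E, k], ⟨hφ, hφ'⟩, ⟨hφ, hφ'⟩,
    Phat_planeWave k _, Dplus_planeWave k _ hβ.ne' hv, Phat_planeWave k _,
    Dplus_planeWave k _ hβ.ne' hv, hψ.eq_smul_planeWave_add_smul_P1 hk hk0 hE.ne'⟩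
end
end

section
/- Let d ≥ 1 be odd. In the Clifford algebra Cl(Q) over ℂ described below, define γ₊ = (1/2)(γ_chir + γ_chir γ̃₀), γ₋ = (1/2)(γ_chir − γ_chir γ̃₀), and γ^j = γ_chir γ̃ⱼ for j = 1, …, d. Then these elements satisfy the Lévy-Leblond gamma-matrix relations: γ₊² = 0, γ₋² = 0, γ₊γ₋ + γ₋γ₊ = 1, γ₊γ^j + γ^jγ₊ = 0 and γ₋γ^j + γ^jγ₋ = 0 for all j = 1, …, d, and γ^jγ^k + γ^kγ^j = 2δ_{jk}·1 for all j, k = 1, …, d. -/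
/-!
Write `A = γ_chir` and `e = γ̃₀`, so that `γ₊ = A(1 + e)/2`, `γ₋ = A(1 - e)/2` and `γ^j = A γ̃ⱼ`.
Reversing the order of the `d + 1` anticommuting generators costs `(-1)^((d+1) choose 2)` and
their squares multiply to `(-1)^d`; the phase `i^((d+3)d/2)` is exactly what makes `A² = 1`.
For odd `d` the product `γ̃₀⋯γ̃_d` has an even number of factors, so it anticommutes with every
generator. Moving `A` across odd elements then gives `(A u)(A v) = -u v`, and each relation
reduces to the Clifford relations among the `γ̃ⱼ`, e.g. `γ₊² = (1 - e)(1 + e)/4 = 0`.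
-/

noncomputable section

/-- The diagonal quadratic form of signature `(1, d)` on `Fin (d+1) → ℂ`:
`Q(e₀) = 1` and `Q(eⱼ) = −1` for `j ≥ 1`, with the associated bilinear form
vanishing on distinct basis vectors. -/
def Qform (d : ℕ) : QuadraticForm ℂ (Fin (d + 1) → ℂ) :=
  QuadraticMap.weightedSumSquares ℂ (fun j : Fin (d + 1) => if j = 0 then (1 : ℂ) else -1)

/-- The generators `γ̃ⱼ` of the Clifford algebra `Cl(Q)`, images of the standard
basis vectors under the canonical embedding `ι`. -/
def γt (d : ℕ) (j : Fin (d + 1)) : CliffordAlgebra (Qform d) :=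
  CliffordAlgebra.ι (Qform d) (Pi.single j 1)

/-- The chirality element `γ_chir = i^{(d+3)d/2} · γ̃₀γ̃₁⋯γ̃_d`. -/
def γchir (d : ℕ) : CliffordAlgebra (Qform d) :=
  (Complex.I ^ ((d + 3) * d / 2)) • ((List.finRange (d + 1)).map (γt d)).prod

/-- `γ₊ = (1/2)(γ_chir + γ_chir γ̃₀)`. -/
def γplus (d : ℕ) : CliffordAlgebra (Qform d) :=
  ((1 : ℂ) / 2) • (γchir d + γchir d * γt d 0)

/-- `γ₋ = (1/2)(γ_chir − γ_chir γ̃₀)`. -/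
def γminus (d : ℕ) : CliffordAlgebra (Qform d) :=
  ((1 : ℂ) / 2) • (γchir d - γchir d * γt d 0)

/-- `γ^j = γ_chir γ̃ⱼ` for `j = 1, …, d`. -/
def γsp (d : ℕ) (j : Fin (d + 1)) : CliffordAlgebra (Qform d) :=
  γchir d * γt d j

def AntiCommute {R : Type*} [Mul R] [Neg R] (a b : R) : Prop := a * b = -(b * a)

namespace AntiCommute

variable {R : Type*} [Ring R] {a b : R}

theorem symm (h : AntiCommute a b) : AntiCommute b a := by
  rw [AntiCommute, h, neg_neg]

theorem neg_left (h : AntiCommute a b) : AntiCommute (-a) b := by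
  rw [AntiCommute, neg_mul, mul_neg, h]

theorem mul_add_mul_eq_zero (h : AntiCommute a b) : a * b + b * a = 0 := by
  rw [h, neg_add_cancel]

theorem smul_left {K : Type*} [Monoid K] [DistribMulAction K R] [IsScalarTower K R R]
    [SMulCommClass K R R] (h : AntiCommute a b) (c : K) : AntiCommute (c • a) b := by
  rw [AntiCommute, smul_mul_assoc, mul_smul_comm, h, smul_neg]

end AntiCommute

namespace List

variable {R : Type*} [Ring R]

theorem prod_mul_of_forall_antiCommute {x : R} :
    ∀ {l : List R}, (∀ a ∈ l, AntiCommute a x) → l.prod * x = (-1 : ℤ) ^ l.length • (x * l.prod)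
  | [], _ => by simp
  | a :: t, h => by
    have ih := prod_mul_of_forall_antiCommute fun b hb => h b (mem_cons_of_mem a hb)
    have ha : a * x = -(x * a) := h a mem_cons_self
    rw [prod_cons, mul_assoc, ih, mul_smul_comm, ← mul_assoc, ha, length_cons, pow_succ, mul_smul]
    simp only [neg_mul, smul_neg, neg_smul, one_smul, mul_assoc]

theorem prod_mul_of_pairwise_antiCommute_of_mem {l : List R} (hl : l.Pairwise AntiCommute)
    {x : R} (hx : x ∈ l) : l.prod * x = -((-1 : ℤ) ^ l.length • (x * l.prod)) := by
  obtain ⟨s, t, rfl⟩ := append_of_mem hx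
  obtain ⟨-, hxt, hst⟩ := pairwise_append.1 hl
  have hs : s.prod * x = (-1 : ℤ) ^ s.length • (x * s.prod) :=
    prod_mul_of_forall_antiCommute fun a ha => hst a ha x mem_cons_self
  have ht : t.prod * x = (-1 : ℤ) ^ t.length • (x * t.prod) :=
    prod_mul_of_forall_antiCommute fun b hb => ((pairwise_cons.1 hxt).1 b hb).symm
  have hs' : x * s.prod = (-1 : ℤ) ^ s.length • (s.prod * x) := by
    rw [hs, smul_smul, pow_mul_pow_eq_one _ (by norm_num), one_smul]
  calc (s ++ x :: t).prod * x = (-1 : ℤ) ^ t.length • (s.prod * (x * (x * t.prod))) := by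
        rw [prod_append, prod_cons, mul_assoc, mul_assoc, ht, mul_smul_comm, mul_smul_comm]
    _ = -((-1 : ℤ) ^ (s ++ x :: t).length • (x * (s ++ x :: t).prod)) := by
      rw [prod_append, prod_cons, ← mul_assoc x s.prod, hs', smul_mul_assoc, smul_smul, ← neg_smul,
        length_append, length_cons]
      simp only [mul_assoc]
      congr 1
      ring_nf
      simp

theorem prod_mul_self_of_pairwise_antiCommute :
    ∀ {l : List R}, l.Pairwise AntiCommute →
      l.prod * l.prod = (-1 : ℤ) ^ l.length.choose 2 • (l.map fun a => a * a).prod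
  | [], _ => by simp
  | a :: t, hl => by
    obtain ⟨ha, ht⟩ := pairwise_cons.1 hl
    have hta : t.prod * a = (-1 : ℤ) ^ t.length • (a * t.prod) :=
      prod_mul_of_forall_antiCommute fun b hb => (ha b hb).symm
    have hchoose : (t.length + 1).choose 2 = t.length + t.length.choose 2 := by
      rw [Nat.choose_succ_succ, Nat.choose_one_right]
    calc a * t.prod * (a * t.prod) = a * (t.prod * a) * t.prod := by simp only [mul_assoc]
      _ = (-1 : ℤ) ^ t.length • (a * a * (t.prod * t.prod)) := by
        rw [hta, mul_smul_comm, smul_mul_assoc]; simp only [mul_assoc]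
      _ = _ := by
        rw [prod_mul_self_of_pairwise_antiCommute ht, mul_smul_comm, smul_smul, ← pow_add,
          length_cons, hchoose, map_cons, prod_cons]

end List

theorem QuadraticMap.isOrtho_weightedSumSquares_single {ι R : Type*} [Fintype ι] [DecidableEq ι]
    [CommRing R] (w : ι → R) {i j : ι} (h : i ≠ j) :
    (weightedSumSquares R w).IsOrtho (Pi.single i 1) (Pi.single j 1) := by
  rw [isOrtho_def]
  simp only [weightedSumSquares_apply, ← Finset.sum_add_distrib]
  refine Finset.sum_congr rfl fun k _ => ?_
  rcases eq_or_ne k i with rfl | hki <;> simp [*]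

theorem γt_mul_self (d : ℕ) (j : Fin (d + 1)) :
    γt d j * γt d j = algebraMap ℂ _ (if j = 0 then 1 else -1) := by
  rw [γt, CliffordAlgebra.ι_sq_scalar, Qform, QuadraticMap.weightedSumSquares_apply]
  simp [Pi.single_apply]

theorem antiCommute_γt (d : ℕ) {j k : Fin (d + 1)} (h : j ≠ k) : AntiCommute (γt d j) (γt d k) :=
  eq_neg_of_add_eq_zero_left <| CliffordAlgebra.ι_mul_ι_add_swap_of_isOrtho <|
    QuadraticMap.isOrtho_weightedSumSquares_single _ h

theorem pairwise_antiCommute_γt (d : ℕ) :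
    ((List.finRange (d + 1)).map (γt d)).Pairwise AntiCommute :=
  List.pairwise_map.2 <| (List.nodup_finRange _).imp (antiCommute_γt d)

theorem prod_γt_mul_self (d : ℕ) :
    ((List.finRange (d + 1)).map fun j => γt d j * γt d j).prod = algebraMap ℂ _ ((-1) ^ d) := by
  have h : ((List.finRange (d + 1)).map fun j => γt d j * γt d j) =
      ((List.finRange (d + 1)).map fun j => if j = 0 then (1 : ℂ) else -1).map
        (algebraMap ℂ _) := by
    simp [γt_mul_self]
  rw [h, ← map_list_prod, ← Fin.prod_univ_def, Fin.prod_univ_succ]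
  simp [Fin.succ_ne_zero]

theorem γchir_mul_self (d : ℕ) : γchir d * γchir d = 1 := by
  have hP := List.prod_mul_self_of_pairwise_antiCommute (pairwise_antiCommute_γt d)
  rw [List.map_map, List.length_map, List.length_finRange] at hP
  have hk : (d + 3) * d / 2 = (d + 1).choose 2 + d := by
    rw [Nat.choose_two_right, Nat.add_sub_cancel, show (d + 3) * d = (d + 1) * d + 2 * d by ring,
      Nat.add_mul_div_left _ _ two_pos]
  rw [γchir, smul_mul_smul_comm, hP, Function.comp_def, prod_γt_mul_self, hk,
    Algebra.algebraMap_eq_smul_one, ← Int.cast_smul_eq_zsmul ℂ, smul_smul, smul_smul]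
  convert one_smul ℂ (1 : CliffordAlgebra (Qform d))
  rw [← mul_pow, Complex.I_mul_I]
  push_cast
  rw [← pow_add, ← pow_add, Even.neg_one_pow ⟨(d + 1).choose 2 + d, by ring⟩]

theorem antiCommute_γchir_γt {d : ℕ} (hodd : Odd d) (j : Fin (d + 1)) :
    AntiCommute (γchir d) (γt d j) := by
  have h := List.prod_mul_of_pairwise_antiCommute_of_mem (pairwise_antiCommute_γt d)
    (List.mem_map_of_mem (f := γt d) (List.mem_finRange j))
  rw [List.length_map, List.length_finRange, (hodd.add_one).neg_one_pow, one_smul] at h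
  rw [AntiCommute, γchir, smul_mul_assoc, h, mul_smul_comm, smul_neg]

namespace AntiCommute

variable {R : Type*} [Ring R] {A e y z : R}

theorem mul_mul_mul_eq_neg (he : AntiCommute e A) (hA : A * A = 1) (v : R) :
    A * e * (A * v) = -(e * v) := by
  rw [mul_assoc, ← mul_assoc e, he, neg_mul, mul_neg, ← mul_assoc, ← mul_assoc, hA, one_mul]

theorem mul_mul_eq_neg (he : AntiCommute e A) (hA : A * A = 1) : A * e * A = -e := by
  simpa using he.mul_mul_mul_eq_neg hA 1

theorem add_mul_sq_eq_zero (he : AntiCommute e A) (hA : A * A = 1) (hee : e * e = 1) :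
    (A + A * e) ^ 2 = 0 := by
  rw [sq, add_mul, mul_add, mul_add, hA, ← mul_assoc, hA, one_mul, he.mul_mul_eq_neg hA,
    he.mul_mul_mul_eq_neg hA, hee]
  abel

theorem add_mul_mul_sub_mul_add_sub_mul_mul_add_mul (he : AntiCommute e A) (hA : A * A = 1)
    (hee : e * e = 1) : (A + A * e) * (A - A * e) + (A - A * e) * (A + A * e) = 4 := by
  rw [add_mul, mul_sub, mul_sub, sub_mul, mul_add, mul_add, hA, ← mul_assoc A A, hA, one_mul,
    he.mul_mul_eq_neg hA, he.mul_mul_mul_eq_neg hA, hee]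
  noncomm_ring
  norm_num

theorem add_mul_mul_left (he : AntiCommute e A) (hy : AntiCommute y A) (hey : AntiCommute e y)
    (hA : A * A = 1) : AntiCommute (A + A * e) (A * y) := by
  rw [AntiCommute, add_mul, mul_add, ← mul_assoc A A, hA, one_mul, he.mul_mul_mul_eq_neg hA,
    hy.mul_mul_eq_neg hA, hy.mul_mul_mul_eq_neg hA, hey]
  abel

theorem mul_left_mul_left (hy : AntiCommute y A) (hz : AntiCommute z A) (hyz : AntiCommute y z)
    (hA : A * A = 1) : AntiCommute (A * y) (A * z) := by
  rw [AntiCommute, hy.mul_mul_mul_eq_neg hA, hz.mul_mul_mul_eq_neg hA, hyz]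

end AntiCommute

theorem levyLeblond_gamma_relations_general (d : ℕ) (hodd : Odd d) :
    γplus d ^ 2 = 0 ∧
    γminus d ^ 2 = 0 ∧
    γplus d * γminus d + γminus d * γplus d = 1 ∧
    (∀ j : Fin (d + 1), j ≠ 0 →
      γplus d * γsp d j + γsp d j * γplus d = 0) ∧
    (∀ j : Fin (d + 1), j ≠ 0 →
      γminus d * γsp d j + γsp d j * γminus d = 0) ∧
    (∀ j k : Fin (d + 1), j ≠ 0 → k ≠ 0 →
      γsp d j * γsp d k + γsp d k * γsp d j
        = if j = k then (2 : CliffordAlgebra (Qform d)) else 0) := by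
  have hA := γchir_mul_self d
  have hγ (j : Fin (d + 1)) : AntiCommute (γt d j) (γchir d) := (antiCommute_γchir_γt hodd j).symm
  have h00 : γt d 0 * γt d 0 = 1 := by simp [γt_mul_self]
  have h0j {j : Fin (d + 1)} (hj : j ≠ 0) : AntiCommute (γt d 0) (γt d j) :=
    antiCommute_γt d hj.symm
  have hminus : γminus d = ((1 : ℂ) / 2) • (γchir d + γchir d * -γt d 0) := by
    rw [γminus, mul_neg, sub_eq_add_neg]
  refine ⟨?_, ?_, ?_, fun j hj => ?_, fun j hj => ?_, fun j k hj hk => ?_⟩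
  · rw [γplus, smul_pow, (hγ 0).add_mul_sq_eq_zero hA h00, smul_zero]
  · rw [hminus, smul_pow, (hγ 0).neg_left.add_mul_sq_eq_zero hA (by rwa [neg_mul_neg]), smul_zero]
  · rw [γplus, γminus, smul_mul_smul_comm, smul_mul_smul_comm, ← smul_add,
      (hγ 0).add_mul_mul_sub_mul_add_sub_mul_mul_add_mul hA h00]
    rw [Algebra.smul_def, ← map_ofNat (algebraMap ℂ _) 4, ← map_mul]
    norm_num
  · exact (((hγ 0).add_mul_mul_left (hγ j) (h0j hj) hA).smul_left _).mul_add_mul_eq_zero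
  · rw [hminus]
    exact (((hγ 0).neg_left.add_mul_mul_left (hγ j) (h0j hj).neg_left hA).smul_left _
      ).mul_add_mul_eq_zero
  · rcases eq_or_ne j k with rfl | hjk
    · rw [if_pos rfl, γsp, (hγ j).mul_mul_mul_eq_neg hA, γt_mul_self, if_neg hj]
      norm_num
    · rw [if_neg hjk]
      exact ((hγ j).mul_left_mul_left (hγ k) (antiCommute_γt d hjk) hA).mul_add_mul_eq_zero

/-- For odd `d ≥ 1`, the elements `γ₊`, `γ₋`, `γ^j` constructed from
the Dirac gamma matrices satisfy the Lévy-Leblond gamma-matrix relations. -/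
theorem levyLeblond_gamma_relations (d : ℕ) (hd : 1 ≤ d) (hodd : Odd d) :
    γplus d ^ 2 = 0 ∧
    γminus d ^ 2 = 0 ∧
    γplus d * γminus d + γminus d * γplus d = 1 ∧
    (∀ j : Fin (d + 1), j ≠ 0 →
      γplus d * γsp d j + γsp d j * γplus d = 0) ∧
    (∀ j : Fin (d + 1), j ≠ 0 →
      γminus d * γsp d j + γsp d j * γminus d = 0) ∧
    (∀ j k : Fin (d + 1), j ≠ 0 → k ≠ 0 →
      γsp d j * γsp d k + γsp d k * γsp d j
        = if j = k then (2 : CliffordAlgebra (Qform d)) else 0) :=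
  levyLeblond_gamma_relations_general d hodd
end
end
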